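/- For all (k,m) ∈ 𝒟, the successor-time identities hold: t_{k,m} + 2^{−2k} = t_{k+1,2m}, and if m is even then t_{k,m} + 2^{1−2k} = t_{k,m+1}. -/

import Mathlib

noncomputable section

/-- Membership in the dyadic index set `𝒟 = {(k,m) : k ≥ 1, 0 ≤ m < 2^k}`. -/
def inD (p : ℕ × ℤ) : Prop := 1 ≤ p.1 ∧ 0 ≤ p.2 ∧ p.2 < 2 ^ p.1

/-- The dyadic index set `𝒟`. -/
def DyadicIndex : Type := {p : ℕ × ℤ // inD p}

/-- The time order `<_time`: compare the dyadic rationals `m 2^{-k}`,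
breaking ties by the smaller level `k`. -/
def ltTime (p q : ℕ × ℤ) : Prop :=
  (p.2 : ℝ) / 2 ^ p.1 < (q.2 : ℝ) / 2 ^ q.1 ∨
    ((p.2 : ℝ) / 2 ^ p.1 = (q.2 : ℝ) / 2 ^ q.1 ∧ p.1 < q.1)

/-- The time `t_{k,m} = Σ_{(k',m') <_time (k,m)} 2^{-2k'}`. -/
noncomputable def tTime (k : ℕ) (m : ℤ) : ℝ :=
  ∑' p : {q : ℕ × ℤ // inD q ∧ ltTime q (k, m)}, (2 : ℝ) ^ (-(2 * (p.1.1 : ℤ)))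

/-! `t_{k,m}` is the total weight of the past of `(k,m)`: the indices of `𝒟` preceding it in time.
The past of `(k+1,2m)`, which has the same dyadic value, is that of `(k,m)` plus `(k,m)` itself.
For even `m`, the past of `(k,m+1)` is that of `(k,m)` plus the dyadic subtree below `(k,m)`: as
`m+1` is odd, an index of level `< k` with value in `[m 2^{-k}, (m+1) 2^{-k}]` has value `m 2^{-k}`
and so already precedes `(k,m)`. Level `j ≥ k` of the subtree has `2^{j-k}` nodes of weight
`2^{-2j}`, so the subtree weighs `Σ_{j ≥ k} 2^{j-k-2j} = 2^{1-2k}`. Summability holds because the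
subtree below `(0,0)` contains `𝒟`. -/

theorem hasSum_of_nonneg_of_hasSum_fiberwise {α β : Type*} {f : α × β → ℝ} (hf : 0 ≤ f)
    {g : α → ℝ} {a : ℝ} (hrows : ∀ x, HasSum (fun y ↦ f (x, y)) (g x)) (hg : HasSum g a) :
    HasSum f a := by
  have hsum : Summable f := (summable_prod_of_nonneg hf).2
    ⟨fun x ↦ (hrows x).summable, by simpa only [(hrows _).tsum_eq] using hg.summable⟩
  obtain rfl := (hsum.hasSum.prod_fiberwise hrows).unique hg
  exact hsum.hasSum

def levelWeight (j : ℕ) : ℝ := 2 ^ (-(2 * (j : ℤ)))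

def dyadicValue (q : ℕ × ℤ) : ℝ := q.2 / 2 ^ q.1

def timePast (p : ℕ × ℤ) : Set (ℕ × ℤ) := {q | inD q ∧ ltTime q p}

def dyadicSubtree (k : ℕ) (m : ℤ) : Set (ℕ × ℤ) :=
  {q | k ≤ q.1 ∧ m * 2 ^ (q.1 - k) ≤ q.2 ∧ q.2 < (m + 1) * 2 ^ (q.1 - k)}

theorem ltTime_iff {p q : ℕ × ℤ} : ltTime p q ↔
    dyadicValue p < dyadicValue q ∨ (dyadicValue p = dyadicValue q ∧ p.1 < q.1) :=
  Iff.rfl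

section DyadicValue

variable {k j : ℕ} {m n : ℤ}

theorem dyadicValue_le_dyadicValue_iff : dyadicValue (k, m) ≤ dyadicValue (k, n) ↔ m ≤ n := by
  rw [dyadicValue, dyadicValue, div_le_div_iff_of_pos_right (by positivity)]
  exact Int.cast_le

theorem dyadicValue_lt_dyadicValue_iff : dyadicValue (k, m) < dyadicValue (k, n) ↔ m < n := by
  rw [dyadicValue, dyadicValue, div_lt_div_iff_of_pos_right (by positivity)]
  exact Int.cast_lt

theorem dyadicValue_inj : dyadicValue (k, m) = dyadicValue (k, n) ↔ m = n := by
  rw [dyadicValue, dyadicValue, div_left_inj' (by positivity)]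
  exact Int.cast_inj

theorem dyadicValue_eq_of_le (h : k ≤ j) :
    dyadicValue (k, m) = dyadicValue (j, m * 2 ^ (j - k)) := by
  simp only [dyadicValue, Int.cast_mul, Int.cast_pow, Int.cast_ofNat,
    pow_sub₀ (2 : ℝ) two_ne_zero h]
  field_simp

theorem dyadicValue_two_mul_succ : dyadicValue (k + 1, 2 * m) = dyadicValue (k, m) := by
  simp only [dyadicValue, Int.cast_mul, Int.cast_ofNat, pow_succ]
  field_simp

end DyadicValue

section DyadicSubtree

variable {k : ℕ} {m : ℤ}

theorem mem_dyadicSubtree_iff {q : ℕ × ℤ} : q ∈ dyadicSubtree k m ↔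
    k ≤ q.1 ∧ dyadicValue (k, m) ≤ dyadicValue q ∧ dyadicValue q < dyadicValue (k, m + 1) := by
  refine and_congr_right fun hkj ↦ ?_
  rw [dyadicValue_eq_of_le hkj, dyadicValue_eq_of_le (m := m + 1) hkj,
    dyadicValue_le_dyadicValue_iff, dyadicValue_lt_dyadicValue_iff]

theorem dyadicSubtree_subset_inD (h : inD (k, m)) : dyadicSubtree k m ⊆ {q | inD q} := by
  rintro ⟨j, n⟩ ⟨hkj, hlo, hhi⟩
  obtain ⟨hk, hm, hmk⟩ := h
  refine ⟨hk.trans hkj, (mul_nonneg hm (by positivity)).trans hlo, ?_⟩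
  calc n < (m + 1) * 2 ^ (j - k) := hhi
    _ ≤ 2 ^ k * 2 ^ (j - k) := by gcongr; exact hmk
    _ = 2 ^ j := by rw [← pow_add, Nat.add_sub_cancel' hkj]

theorem inD_subset_dyadicSubtree_zero : {q | inD q} ⊆ dyadicSubtree 0 0 := by
  rintro ⟨j, n⟩ ⟨-, hn, hnj⟩
  simpa [dyadicSubtree] using ⟨hn, hnj⟩

theorem hasSum_dyadicSubtree_level (k j : ℕ) (m : ℤ) :
    HasSum (fun n ↦ (dyadicSubtree k m).indicator (fun q ↦ levelWeight q.1) (j, n))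
      (if k ≤ j then 2 ^ (j - k) * levelWeight j else 0) := by
  split_ifs with hkj
  · have hzero : ∀ n ∉ Finset.Ico (m * 2 ^ (j - k)) ((m + 1) * 2 ^ (j - k)),
        (dyadicSubtree k m).indicator (fun q ↦ levelWeight q.1) (j, n) = 0 :=
      fun n hn ↦ Set.indicator_of_notMem (fun hq ↦ hn (Finset.mem_Ico.2 hq.2)) _
    have hcard : ((m + 1) * 2 ^ (j - k) - m * 2 ^ (j - k)).toNat = 2 ^ (j - k) := by
      rw [← sub_mul, add_sub_cancel_left, one_mul]
      norm_cast
    convert hasSum_sum_of_ne_finset_zero (L := .unconditional ℤ) hzero using 1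
    rw [Finset.sum_congr rfl fun n hn ↦ Set.indicator_of_mem
      (show (j, n) ∈ dyadicSubtree k m from ⟨hkj, Finset.mem_Ico.1 hn⟩) _]
    dsimp only
    rw [Finset.sum_const, Int.card_Ico, hcard, nsmul_eq_mul, Nat.cast_pow, Nat.cast_ofNat]
  · convert hasSum_zero with n
    exact Set.indicator_of_notMem (fun hq ↦ hkj hq.1) _

theorem hasSum_dyadicSubtree_levels (k : ℕ) :
    HasSum (fun j ↦ if k ≤ j then (2 : ℝ) ^ (j - k) * levelWeight j else 0)
      (2 ^ (1 - 2 * (k : ℤ))) := by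
  rw [← (add_left_injective k).hasSum_iff fun j hj ↦ if_neg fun hkj ↦
    hj ⟨j - k, Nat.sub_add_cancel hkj⟩]
  have hterm : ∀ i : ℕ, (2 : ℝ) ^ (i + k - k) * levelWeight (i + k) =
      2 ^ (-(2 * (k : ℤ))) * (1 / 2) ^ i := by
    intro i
    rw [levelWeight, Nat.add_sub_cancel, one_div, inv_pow, ← zpow_natCast, ← zpow_neg,
      ← zpow_add₀ two_ne_zero, ← zpow_add₀ two_ne_zero]
    congr 1
    push_cast
    ring
  simp only [Function.comp_def, Nat.le_add_left, if_true, hterm]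
  rw [sub_eq_neg_add, zpow_add₀ two_ne_zero, zpow_one]
  exact hasSum_geometric_two.mul_left _

theorem hasSum_dyadicSubtree (k : ℕ) (m : ℤ) :
    HasSum ((fun q : ℕ × ℤ ↦ levelWeight q.1) ∘ (↑) : dyadicSubtree k m → ℝ)
      (2 ^ (1 - 2 * (k : ℤ))) := by
  have hnonneg : 0 ≤ (dyadicSubtree k m).indicator fun q ↦ levelWeight q.1 :=
    Set.indicator_nonneg fun q _ ↦ by unfold levelWeight; positivity
  exact hasSum_subtype_iff_indicator.2 <| hasSum_of_nonneg_of_hasSum_fiberwise hnonneg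
    (fun j ↦ hasSum_dyadicSubtree_level k j m) (hasSum_dyadicSubtree_levels k)

end DyadicSubtree

theorem summable_levelWeight_of_subset_inD {S : Set (ℕ × ℤ)} (hS : S ⊆ {q | inD q}) :
    Summable ((fun q : ℕ × ℤ ↦ levelWeight q.1) ∘ (↑) : S → ℝ) := by
  have hsub := hS.trans inD_subset_dyadicSubtree_zero
  exact (hasSum_dyadicSubtree 0 0).summable.comp_injective (i := Set.inclusion hsub)
    (Set.inclusion_injective hsub)

theorem hasSum_tTime (k : ℕ) (m : ℤ) :
    HasSum ((fun q : ℕ × ℤ ↦ levelWeight q.1) ∘ (↑) : timePast (k, m) → ℝ) (tTime k m) :=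
  (summable_levelWeight_of_subset_inD fun _ hq ↦ hq.1).hasSum

section TimePast

variable {k : ℕ} {m : ℤ}

theorem notMem_timePast_self : (k, m) ∉ timePast (k, m) := by
  rintro ⟨-, hlt | ⟨-, hlt⟩⟩ <;> exact lt_irrefl _ hlt

theorem timePast_succ_level (h : inD (k, m)) :
    timePast (k + 1, 2 * m) = timePast (k, m) ∪ {(k, m)} := by
  ext ⟨j, n⟩
  simp only [timePast, Set.mem_union, Set.mem_singleton_iff, Set.mem_ofPred_eq, ltTime_iff,
    dyadicValue_two_mul_succ, Prod.mk.injEq]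
  constructor
  · rintro ⟨hD, hlt | ⟨heq, hj⟩⟩
    · exact .inl ⟨hD, .inl hlt⟩
    · rcases (Nat.lt_succ_iff.1 hj).lt_or_eq with hj | rfl
      · exact .inl ⟨hD, .inr ⟨heq, hj⟩⟩
      · exact .inr ⟨rfl, dyadicValue_inj.1 heq⟩
  · rintro (⟨hD, hlt | ⟨heq, hj⟩⟩ | ⟨rfl, rfl⟩)
    · exact ⟨hD, .inl hlt⟩
    · exact ⟨hD, .inr ⟨heq, hj.trans (Nat.lt_add_one k)⟩⟩
    · exact ⟨h, .inr ⟨rfl, Nat.lt_add_one _⟩⟩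

theorem disjoint_timePast_dyadicSubtree : Disjoint (timePast (k, m)) (dyadicSubtree k m) := by
  refine Set.disjoint_left.2 fun q hpast hsub ↦ ?_
  obtain ⟨hkj, hlo, -⟩ := mem_dyadicSubtree_iff.1 hsub
  rcases hpast.2 with hlt | ⟨-, hjk⟩
  · exact hlt.not_ge hlo
  · exact hjk.not_ge hkj

theorem mem_dyadicSubtree_of_ltTime_succ (hm : Even m) {q : ℕ × ℤ}
    (hlt : ltTime q (k, m + 1)) (hnot : ¬ ltTime q (k, m)) : q ∈ dyadicSubtree k m := by
  obtain ⟨j, n⟩ := q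
  rw [ltTime_iff] at hlt hnot
  push Not at hnot
  obtain ⟨hlo, hkj⟩ := hnot
  have hk : k ≤ j := by
    by_contra! hjk
    rw [dyadicValue_eq_of_le hjk.le] at hlt hlo hkj
    have hN : Even (n * 2 ^ (k - j)) :=
      (Int.even_pow.2 ⟨even_two, (Nat.sub_pos_of_lt hjk).ne'⟩).mul_left n
    have hle : n * 2 ^ (k - j) ≤ m + 1 := by
      rcases hlt with hlt | ⟨heq, -⟩
      · exact (dyadicValue_lt_dyadicValue_iff.1 hlt).le
      · exact (dyadicValue_inj.1 heq).le
    have hge := dyadicValue_le_dyadicValue_iff.1 hlo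
    have heq : n * 2 ^ (k - j) = m := by
      obtain ⟨a, ha⟩ := hN
      obtain ⟨b, hb⟩ := hm
      omega
    exact hjk.not_ge (hkj (by rw [heq]))
  refine mem_dyadicSubtree_iff.2 ⟨hk, hlo, ?_⟩
  rcases hlt with hlt | ⟨-, hjk⟩
  · exact hlt
  · exact absurd hk hjk.not_ge

theorem timePast_succ_of_even (h : inD (k, m)) (hm : Even m) :
    timePast (k, m + 1) = timePast (k, m) ∪ dyadicSubtree k m := by
  have hval : dyadicValue (k, m) < dyadicValue (k, m + 1) :=
    dyadicValue_lt_dyadicValue_iff.2 (lt_add_one m)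
  ext q
  constructor
  · rintro ⟨hD, hlt⟩
    by_cases hpast : ltTime q (k, m)
    · exact .inl ⟨hD, hpast⟩
    · exact .inr (mem_dyadicSubtree_of_ltTime_succ hm hlt hpast)
  · rintro (⟨hD, hlt | ⟨heq, -⟩⟩ | hsub)
    · exact ⟨hD, .inl (hlt.trans hval)⟩
    · exact ⟨hD, .inl (heq.trans_lt hval)⟩
    · exact ⟨dyadicSubtree_subset_inD h hsub, .inl (mem_dyadicSubtree_iff.1 hsub).2.2⟩

end TimePast

theorem tTime_add_levelWeight {k : ℕ} {m : ℤ} (h : inD (k, m)) :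
    tTime k m + levelWeight k = tTime (k + 1) (2 * m) := by
  have hsum := (hasSum_tTime k m).add_disjoint
    (Set.disjoint_singleton_right.2 notMem_timePast_self)
    (hasSum_singleton (k, m) fun q : ℕ × ℤ ↦ levelWeight q.1)
  rw [← timePast_succ_level h] at hsum
  exact hsum.unique (hasSum_tTime (k + 1) (2 * m))

theorem tTime_add_dyadicSubtree {k : ℕ} {m : ℤ} (h : inD (k, m)) (hm : Even m) :
    tTime k m + 2 ^ (1 - 2 * (k : ℤ)) = tTime k (m + 1) := by
  have hsum := (hasSum_tTime k m).add_disjoint disjoint_timePast_dyadicSubtree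
    (hasSum_dyadicSubtree k m)
  rw [← timePast_succ_of_even h hm] at hsum
  exact hsum.unique (hasSum_tTime k (m + 1))

/-- Successor-time identities: `t_{k,m} + 2^{-2k} = t_{k+1,2m}`,
and if `m` is even then `t_{k,m} + 2^{1-2k} = t_{k,m+1}`. -/
theorem tTime_successor (k : ℕ) (m : ℤ) (h : inD (k, m)) :
    tTime k m + (2 : ℝ) ^ (-(2 * (k : ℤ))) = tTime (k + 1) (2 * m) ∧
    (Even m → tTime k m + (2 : ℝ) ^ (1 - 2 * (k : ℤ)) = tTime k (m + 1)) :=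
  ⟨tTime_add_levelWeight h, tTime_add_dyadicSubtree h⟩

end
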